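/- arXiv:2004.01700 — 2 statements merged into one kernel-verified Lean document; each statement's English description precedes it below -/
import Mathlib

section
/- For every real ξ with 0 ≤ ξ < 1, the integral ∫₀^π cos ψ / (1 − ξ cos ψ)^{3/2} dψ equals (π/(1+ξ)^{3/2}) · [₂F₁(3/2, 3/2; 2; 2ξ/(1+ξ)) − ₂F₁(1/2, 3/2; 1; 2ξ/(1+ξ))]. -/
/-!
Substituting `ψ = 2θ` and using `cos 2θ = 2 cos² θ - 1` gives
`1 - ξ cos ψ = (1 + ξ)(1 - z cos² θ)` with `z = 2ξ/(1+ξ) ∈ [0, 1)`. Expanding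
`(1 - z cos² θ)^(-s)` by the binomial series and integrating term by term with Wallis' formula
`∫₀^{π/2} cos^{2n} = (π/2) (1/2)_n / n!` yields
`∫₀^π (1 - ξ cos ψ)^(-s) dψ = π (1+ξ)^(-s) ₂F₁(s, 1/2; 1; z)`.
Since `ξ cos ψ = 1 - (1 - ξ cos ψ)`, `ξ` times the integral in question is the difference of the
cases `s = 3/2` and `s = 1/2`, and the contiguous relation
`₂F₁(a+1, b; c; z) - ₂F₁(a, b; c; z) = (b z / c) ₂F₁(a+1, b+1; c+1; z)` turns that difference
into the stated form.
-/

open Real intervalIntegral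

/-- Pochhammer symbol `(a)_n` for real `a`. -/
noncomputable def poch (a : ℝ) (n : ℕ) : ℝ := ∏ i ∈ Finset.range n, (a + i)

/-- Gauss hypergeometric function `₂F₁(a,b;c;x)` as a power series (for `|x| < 1`). -/
noncomputable def hyp2F1 (a b c x : ℝ) : ℝ :=
  ∑' n : ℕ, (poch a n * poch b n) / (poch c n * n.factorial) * x ^ n

open Nat MeasureTheory

lemma poch_succ (a : ℝ) (n : ℕ) : poch a (n + 1) = poch a n * (a + n) :=
  Finset.prod_range_succ _ _

lemma poch_succ_left (a : ℝ) (n : ℕ) : poch a (n + 1) = a * poch (a + 1) n := by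
  rw [poch, Finset.prod_range_succ', poch, Nat.cast_zero, add_zero, mul_comm]
  congr 1
  exact Finset.prod_congr rfl fun i _ => by push_cast; ring

lemma poch_eq_ascPochhammer_eval (a : ℝ) (n : ℕ) : poch a n = (ascPochhammer ℝ n).eval a := by
  induction n with
  | zero => simp [poch]
  | succ n ih => rw [poch_succ, ascPochhammer_succ_eval, ih]

lemma poch_one (n : ℕ) : poch 1 n = n ! := by
  induction n with
  | zero => simp [poch]
  | succ n ih => rw [poch_succ, ih, factorial_succ]; push_cast; ring

lemma choose_add_sub_one_eq_poch_div (s : ℝ) (n : ℕ) :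
    Ring.choose (s + n - 1) n = poch s n / n ! := by
  rw [Ring.choose_eq_smul, Polynomial.descPochhammer_smeval_eq_ascPochhammer,
    Polynomial.ascPochhammer_smeval_eq_eval, poch_eq_ascPochhammer_eval, smul_eq_mul,
    show s + n - 1 - n + 1 = s by ring, inv_mul_eq_div]

lemma one_le_radius_ordinaryHypergeometricSeries {𝕂 : Type*} (𝔸 : Type*) [RCLike 𝕂]
    [NormedDivisionRing 𝔸] [NormedAlgebra 𝕂 𝔸] (a b c : 𝕂) :
    1 ≤ (ordinaryHypergeometricSeries 𝔸 a b c).radius := by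
  by_cases habc : ∀ k : ℕ, (k : 𝕂) ≠ -a ∧ (k : 𝕂) ≠ -b ∧ (k : 𝕂) ≠ -c
  · exact (ordinaryHypergeometricSeries_radius_eq_one 𝔸 a b c habc).ge
  -- a non-positive integer parameter makes the series terminate
  push Not at habc
  obtain ⟨k, hk⟩ := habc
  by_cases ha : (k : 𝕂) = -a
  · rw [show a = -(k : 𝕂) by rw [ha, neg_neg], ordinaryHypergeometric_radius_top_of_neg_nat₁]
    exact le_top
  by_cases hb : (k : 𝕂) = -b
  · rw [show b = -(k : 𝕂) by rw [hb, neg_neg], ordinaryHypergeometric_radius_top_of_neg_nat₂]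
    exact le_top
  rw [show c = -(k : 𝕂) by rw [hk ha hb, neg_neg], ordinaryHypergeometric_radius_top_of_neg_nat₃]
  exact le_top

noncomputable def hyp2F1Coeff (a b c : ℝ) (n : ℕ) : ℝ := poch a n * poch b n / (poch c n * n !)

lemma hyp2F1Coeff_zero (a b c : ℝ) : hyp2F1Coeff a b c 0 = 1 := by
  simp [hyp2F1Coeff, poch]

lemma hyp2F1Coeff_one_one (s : ℝ) (n : ℕ) : hyp2F1Coeff s 1 1 n = poch s n / n ! := by
  have : (n ! : ℝ) ≠ 0 := by positivity
  rw [hyp2F1Coeff, poch_one]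
  field_simp

lemma hyp2F1Coeff_add_one_sub (a b c : ℝ) (n : ℕ) :
    hyp2F1Coeff (a + 1) b c (n + 1) - hyp2F1Coeff a b c (n + 1) =
      b / c * hyp2F1Coeff (a + 1) (b + 1) (c + 1) n := by
  have : (n + 1 : ℝ) ≠ 0 := by positivity
  simp only [hyp2F1Coeff]
  rw [poch_succ (a + 1), poch_succ_left a, poch_succ_left b, poch_succ_left c, factorial_succ]
  push_cast
  field_simp
  ring

lemma summable_norm_hyp2F1Coeff_mul_pow (a b c : ℝ) {x : ℝ} (hx : |x| < 1) :
    Summable fun n => ‖hyp2F1Coeff a b c n * x ^ n‖ := by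
  have hmem : x ∈ Metric.eball (0 : ℝ) (ordinaryHypergeometricSeries ℝ a b c).radius := by
    refine lt_of_lt_of_le ?_ (one_le_radius_ordinaryHypergeometricSeries ℝ a b c)
    simpa [edist_dist, ← ENNReal.ofReal_one, ENNReal.ofReal_lt_ofReal_iff] using hx
  refine ((ordinaryHypergeometricSeries ℝ a b c).summable_norm_apply hmem).congr fun n => ?_
  rw [ordinaryHypergeometricSeries_apply_eq, hyp2F1Coeff, poch_eq_ascPochhammer_eval,
    poch_eq_ascPochhammer_eval, poch_eq_ascPochhammer_eval, smul_eq_mul]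
  congr 2
  field_simp

lemma hasSum_hyp2F1 (a b c : ℝ) {x : ℝ} (hx : |x| < 1) :
    HasSum (fun n => hyp2F1Coeff a b c n * x ^ n) (hyp2F1 a b c x) :=
  (summable_norm_hyp2F1Coeff_mul_pow a b c hx).of_norm.hasSum

lemma hyp2F1_zero (a b c : ℝ) : hyp2F1 a b c 0 = 1 := by
  rw [hyp2F1, tsum_eq_single 0 fun n hn => by simp [hn], pow_zero, mul_one]
  exact hyp2F1Coeff_zero a b c

lemma hyp2F1_comm (a b c x : ℝ) : hyp2F1 a b c x = hyp2F1 b a c x := by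
  simp only [hyp2F1, mul_comm (poch a _)]

lemma hyp2F1_add_one_sub (a b c : ℝ) {z : ℝ} (hz : |z| < 1) :
    hyp2F1 (a + 1) b c z - hyp2F1 a b c z = b * z / c * hyp2F1 (a + 1) (b + 1) (c + 1) z := by
  have hdiff := (hasSum_hyp2F1 (a + 1) b c hz).sub (hasSum_hyp2F1 a b c hz)
  refine hdiff.unique ((hasSum_nat_add_iff' 1).1 ?_)
  rw [Finset.sum_range_one, hyp2F1Coeff_zero, hyp2F1Coeff_zero, sub_self, sub_zero]
  refine ((hasSum_hyp2F1 (a + 1) (b + 1) (c + 1) hz).mul_left _).congr_fun fun n => ?_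
  rw [← sub_mul, hyp2F1Coeff_add_one_sub]
  ring

lemma hasSum_one_sub_rpow_neg (s : ℝ) {t : ℝ} (ht : |t| < 1) :
    HasSum (fun n => poch s n / n ! * t ^ n) ((1 - t) ^ (-s)) := by
  have hmem : t ∈ Metric.eball (0 : ℝ) 1 := by
    simpa [edist_dist, ← ENNReal.ofReal_one, ENNReal.ofReal_lt_ofReal_iff] using ht
  have h := (Real.one_div_one_sub_rpow_hasFPowerSeriesOnBall_zero s).hasSum hmem
  simp only [FormalMultilinearSeries.ofScalars_apply_eq, smul_eq_mul, zero_add,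
    choose_add_sub_one_eq_poch_div] at h
  rwa [one_div, ← Real.rpow_neg (by linarith [le_abs_self t])] at h

lemma integral_cos_pow_even_zero_pi_div_two (n : ℕ) :
    ∫ θ in (0 : ℝ)..π / 2, cos θ ^ (2 * n) = π / 2 * (poch (1 / 2) n / n !) := by
  induction n with
  | zero => simp [poch]
  | succ n ih =>
    have : (n ! : ℝ) ≠ 0 := by positivity
    rw [show 2 * (n + 1) = 2 * n + 2 by ring, integral_cos_pow, ih, cos_pi_div_two, poch_succ,
      factorial_succ, zero_pow (succ_ne_zero _), sin_zero, mul_zero, zero_mul, sub_zero,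
      zero_div, zero_add]
    push_cast
    field_simp
    ring

lemma integral_one_sub_mul_cos_sq_rpow_neg (s : ℝ) {z : ℝ} (hz : |z| < 1) :
    ∫ θ in (0 : ℝ)..π / 2, (1 - z * cos θ ^ 2) ^ (-s) = π / 2 * hyp2F1 s (1 / 2) 1 z := by
  set c : ℕ → ℝ := fun n => poch s n / n ! * z ^ n
  have hc : Summable fun n => ‖c n‖ := by
    simpa only [c, hyp2F1Coeff_one_one] using summable_norm_hyp2F1Coeff_mul_pow s 1 1 hz
  have hterm : HasSum (fun n => ∫ θ in (0 : ℝ)..π / 2, c n * cos θ ^ (2 * n))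
      (∫ θ in (0 : ℝ)..π / 2, (1 - z * cos θ ^ 2) ^ (-s)) := by
    refine hasSum_integral_of_dominated_convergence (fun n _ => ‖c n‖)
      (fun n => by fun_prop) (fun n => ae_of_all _ fun θ _ => ?_)
      (ae_of_all _ fun _ _ => hc) intervalIntegrable_const (ae_of_all _ fun θ _ => ?_)
    · rw [norm_mul, norm_pow, Real.norm_eq_abs (cos θ)]
      exact mul_le_of_le_one_right (norm_nonneg _) (pow_le_one₀ (abs_nonneg _) (abs_cos_le_one θ))
    · have hzθ : |z * cos θ ^ 2| < 1 := by
        rw [abs_mul, abs_pow, sq_abs]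
        exact (mul_le_of_le_one_right (abs_nonneg z) (cos_sq_le_one θ)).trans_lt hz
      refine (hasSum_one_sub_rpow_neg s hzθ).congr_fun fun n => ?_
      rw [mul_pow, ← pow_mul, mul_comm 2 n]
      ring
  refine hterm.unique (((hasSum_hyp2F1 s (1 / 2) 1 hz).mul_left (π / 2)).congr_fun fun n => ?_)
  have : (n ! : ℝ) ≠ 0 := by positivity
  rw [intervalIntegral.integral_const_mul, integral_cos_pow_even_zero_pi_div_two, hyp2F1Coeff,
    poch_one]
  simp only [c]
  field_simp

lemma integral_one_sub_mul_cos_rpow_neg (s : ℝ) {ξ : ℝ} (h0 : 0 ≤ ξ) (h1 : ξ < 1) :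
    ∫ ψ in (0 : ℝ)..π, (1 - ξ * cos ψ) ^ (-s) =
      π * (1 + ξ) ^ (-s) * hyp2F1 s (1 / 2) 1 (2 * ξ / (1 + ξ)) := by
  have hξ : 0 < 1 + ξ := by linarith
  set z := 2 * ξ / (1 + ξ)
  have hz0 : 0 ≤ z := by positivity
  have hz1 : z < 1 := by rw [div_lt_one hξ]; linarith
  have half_angle (θ : ℝ) :
      (1 - ξ * cos (2 * θ)) ^ (-s) = (1 + ξ) ^ (-s) * (1 - z * cos θ ^ 2) ^ (-s) := by
    have : 0 ≤ 1 - z * cos θ ^ 2 := by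
      linarith [mul_le_of_le_one_right hz0 (cos_sq_le_one θ)]
    rw [← mul_rpow hξ.le this, cos_two_mul]
    congr 1
    simp only [z]
    field_simp
    ring
  have hsub := integral_comp_mul_left (fun ψ => (1 - ξ * cos ψ) ^ (-s)) (two_ne_zero' ℝ)
    (a := 0) (b := π / 2)
  rw [mul_zero, mul_div_cancel₀ π two_ne_zero, smul_eq_mul] at hsub
  calc ∫ ψ in (0 : ℝ)..π, (1 - ξ * cos ψ) ^ (-s)
      = 2 * ∫ θ in (0 : ℝ)..π / 2, (1 - ξ * cos (2 * θ)) ^ (-s) := by rw [hsub]; ring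
    _ = 2 * ∫ θ in (0 : ℝ)..π / 2, (1 + ξ) ^ (-s) * (1 - z * cos θ ^ 2) ^ (-s) := by
      simp_rw [half_angle]
    _ = π * (1 + ξ) ^ (-s) * hyp2F1 s (1 / 2) 1 z := by
      rw [intervalIntegral.integral_const_mul,
        integral_one_sub_mul_cos_sq_rpow_neg s (by rwa [abs_of_nonneg hz0])]
      ring

lemma mul_integral_cos_mul_rpow (t : ℝ) {ξ : ℝ} (hξ : |ξ| < 1) :
    ξ * ∫ ψ in (0 : ℝ)..π, cos ψ * (1 - ξ * cos ψ) ^ t =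
      (∫ ψ in (0 : ℝ)..π, (1 - ξ * cos ψ) ^ t) - ∫ ψ in (0 : ℝ)..π, (1 - ξ * cos ψ) ^ (t + 1) := by
  have hpos (ψ : ℝ) : 0 < 1 - ξ * cos ψ := by
    have := (abs_mul ξ (cos ψ)).trans_le (mul_le_of_le_one_right (abs_nonneg ξ) (abs_cos_le_one ψ))
    linarith [le_abs_self (ξ * cos ψ)]
  have hcont (r : ℝ) : Continuous fun ψ => (1 - ξ * cos ψ) ^ r :=
    (by fun_prop : Continuous fun ψ => 1 - ξ * cos ψ).rpow_const fun ψ => Or.inl (hpos ψ).ne'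
  rw [← intervalIntegral.integral_const_mul, ← intervalIntegral.integral_sub
    ((hcont t).intervalIntegrable _ _) ((hcont (t + 1)).intervalIntegrable _ _)]
  refine intervalIntegral.integral_congr fun ψ _ => ?_
  simp only [rpow_add_one (hpos ψ).ne']
  ring

theorem integral_I2_eq_hyp (ξ : ℝ) (h0 : 0 ≤ ξ) (h1 : ξ < 1) :
    ∫ ψ in (0:ℝ)..π, Real.cos ψ * (1 - ξ * Real.cos ψ) ^ (-(3/2) : ℝ) =
      π / (1 + ξ) ^ ((3/2) : ℝ) *
        (hyp2F1 (3/2) (3/2) 2 (2 * ξ / (1 + ξ)) - hyp2F1 (1/2) (3/2) 1 (2 * ξ / (1 + ξ))) := by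
  rcases h0.eq_or_lt with rfl | hξ
  · simp [integral_cos, hyp2F1_zero]
  have hξ1 : 0 < 1 + ξ := by linarith
  have hz : |2 * ξ / (1 + ξ)| < 1 := by
    rw [abs_of_nonneg (by positivity), div_lt_one hξ1]
    linarith
  have hsplit := mul_integral_cos_mul_rpow (-(3 / 2)) (abs_lt.2 ⟨by linarith, h1⟩)
  rw [show (-(3 / 2) : ℝ) + 1 = -(1 / 2) by norm_num, integral_one_sub_mul_cos_rpow_neg _ h0 h1,
    integral_one_sub_mul_cos_rpow_neg _ h0 h1] at hsplit
  have hcontig := hyp2F1_add_one_sub (1 / 2) (1 / 2) 1 hz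
  norm_num at hcontig
  have hpow : (1 + ξ) ^ (3 / 2 : ℝ) = (1 + ξ) ^ (1 / 2 : ℝ) * (1 + ξ) := by
    rw [← rpow_add_one hξ1.ne']
    norm_num
  have : 0 < (1 + ξ) ^ (1 / 2 : ℝ) := by positivity
  simp only [rpow_neg hξ1.le, hpow] at hsplit
  rw [hyp2F1_comm (1 / 2), hpow]
  refine mul_left_cancel₀ hξ.ne' ?_
  rw [hsplit]
  field_simp at hcontig ⊢
  linear_combination hcontig
end

section
/- For 0 ≤ ξ < 1, the integral ∫₀^π (1 − ξ cos ψ)^{-3/2} dψ equals the convergent series π Σ_{n≥0} [((1/2)_n (3/2)_n / (n!)²)] (2ξ/(1+ξ))ⁿ / (1+ξ)^{3/2}, and this series converges absolutely since 2ξ/(1+ξ) < 1. -/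
open Real

/-! Since `1 - ξ cos ψ = (1 + ξ)(1 - x cos²(ψ/2))` with `x = 2ξ/(1+ξ) < 1`, the integrand is
`(1 + ξ)^{-3/2}` times the binomial series `Σ (3/2)_n/n! · (x cos²(ψ/2))^n`. That series is
dominated, uniformly in `ψ`, by its value at `cos = 1`, so it may be integrated term by term, and
the Wallis integrals `∫₀^π cos^{2n}(ψ/2) dψ = π (1/2)_n/n!` give the coefficients. Absolute
convergence is then free: the resulting series has nonnegative terms and a sum. -/

open Finset Set intervalIntegral

theorem ascPochhammer_eval_eq_poch (a : ℝ) (n : ℕ) :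
    (ascPochhammer ℝ n).eval a = poch a n := by
  induction n with
  | zero => simp [poch]
  | succ n ih => rw [ascPochhammer_succ_eval, ih, poch, poch, prod_range_succ]

theorem poch_nonneg {a : ℝ} (ha : 0 ≤ a) (n : ℕ) : 0 ≤ poch a n :=
  prod_nonneg fun _ _ => by positivity

theorem Ring.choose_add_sub_one_eq_poch_div_factorial (a : ℝ) (n : ℕ) :
    Ring.choose (a + n - 1) n = poch a n / n.factorial := by
  rw [← Ring.multichoose_eq, eq_div_iff (by positivity), mul_comm, ← nsmul_eq_mul,
    Ring.factorial_nsmul_multichoose_eq_ascPochhammer, Polynomial.ascPochhammer_smeval_eq_eval,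
    ascPochhammer_eval_eq_poch]

theorem prod_two_mul_add_one_div_eq_poch (n : ℕ) :
    ∏ i ∈ range n, (2 * (i : ℝ) + 1) / (2 * i + 2) = poch (1 / 2) n / n.factorial := by
  rw [poch, ← prod_range_add_one_eq_factorial, Nat.cast_prod, ← prod_div_distrib]
  refine prod_congr rfl fun i _ => ?_
  push_cast
  field_simp
  ring

theorem integral_cos_half_pow_two_mul (n : ℕ) :
    ∫ ψ in (0 : ℝ)..π, cos (ψ / 2) ^ (2 * n) = π * (poch (1 / 2) n / n.factorial) := by
  calc ∫ ψ in (0 : ℝ)..π, cos (ψ / 2) ^ (2 * n)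
      = 2 * ∫ θ in (0 : ℝ)..π / 2, cos θ ^ (2 * n) := by
        simpa using
          integral_comp_div (fun θ => cos θ ^ (2 * n)) (two_ne_zero' ℝ) (a := 0) (b := π)
    _ = ∫ θ in (0 : ℝ)..π, sin θ ^ (2 * n) := by rw [EulerSine.integral_cos_pow_eq]; ring
    _ = π * (poch (1 / 2) n / n.factorial) := by
        rw [integral_sin_pow_even, prod_two_mul_add_one_div_eq_poch]

theorem hasSum_choose_mul_integral_pow (a : ℝ) {f : ℝ → ℝ} {α β r : ℝ}
    (hf : ContinuousOn f (uIcc α β)) (hr0 : 0 ≤ r) (hr1 : r < 1)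
    (hfr : ∀ ψ ∈ uIcc α β, |f ψ| ≤ r) :
    HasSum (fun n : ℕ => Ring.choose (a + n - 1) n * ∫ ψ in α..β, f ψ ^ n)
      (∫ ψ in α..β, (1 - f ψ) ^ (-a)) := by
  set c : ℕ → ℝ := fun n => Ring.choose (a + n - 1) n
  have hp := one_div_one_sub_rpow_hasFPowerSeriesOnBall_zero a
  have hbound : Summable fun n => ‖c n‖ * r ^ n := by
    lift r to NNReal using hr0
    have hr : (r : ENNReal) < 1 := by exact_mod_cast hr1
    simpa only [FormalMultilinearSeries.ofScalars_norm] using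
      (FormalMultilinearSeries.ofScalars ℝ c).summable_norm_mul_pow (hr.trans_le hp.r_le)
  have hpoint (ψ : ℝ) (hψ : ψ ∈ uIcc α β) :
      HasSum (fun n => c n * f ψ ^ n) ((1 - f ψ) ^ (-a)) := by
    have hlt : |f ψ| < 1 := (hfr ψ hψ).trans_lt hr1
    have := hp.hasSum (y := f ψ) (by simpa [Metric.mem_eball, edist_dist] using hlt)
    simp only [FormalMultilinearSeries.ofScalars_apply_eq, smul_eq_mul, zero_add] at this
    rwa [rpow_neg (by linarith [le_abs_self (f ψ)]), ← one_div]
  have hsub : uIoc α β ⊆ uIcc α β := uIoc_subset_uIcc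
  simp_rw [← integral_const_mul]
  refine hasSum_integral_of_dominated_convergence (fun n _ => ‖c n‖ * r ^ n) (fun n => ?_)
    ?_ ?_ intervalIntegrable_const ?_
  · exact ((continuousOn_const.mul (hf.pow n)).mono hsub).aestronglyMeasurable measurableSet_uIoc
  · refine fun n => Filter.Eventually.of_forall fun ψ hψ => ?_
    rw [norm_mul, norm_pow, Real.norm_eq_abs]
    gcongr
    exact hfr ψ (hsub hψ)
  · exact Filter.Eventually.of_forall fun _ _ => hbound
  · exact Filter.Eventually.of_forall fun ψ hψ => hpoint ψ (hsub hψ)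

theorem one_sub_mul_cos_eq_mul_one_sub_mul_cos_half_sq (ξ ψ : ℝ) (hξ : 1 + ξ ≠ 0) :
    1 - ξ * cos ψ = (1 + ξ) * (1 - 2 * ξ / (1 + ξ) * cos (ψ / 2) ^ 2) := by
  rw [cos_sq (ψ / 2), show 2 * (ψ / 2) = ψ by ring]
  field_simp
  ring

theorem I1_series (ξ : ℝ) (h0 : 0 ≤ ξ) (h1 : ξ < 1) :
    Summable (fun n : ℕ =>
      |poch (1/2) n * poch (3/2) n / (n.factorial : ℝ)^2 * (2 * ξ / (1 + ξ)) ^ n|) ∧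
    (∫ ψ in (0:ℝ)..π, (1 - ξ * Real.cos ψ) ^ (-(3/2) : ℝ)) =
      π * (∑' n : ℕ,
        poch (1/2) n * poch (3/2) n / (n.factorial : ℝ)^2 * (2 * ξ / (1 + ξ)) ^ n)
        / (1 + ξ) ^ ((3/2) : ℝ) := by
  have hξ : 0 < 1 + ξ := by linarith
  set x := 2 * ξ / (1 + ξ) with hx
  have hx0 : 0 ≤ x := by positivity
  have hx1 : x < 1 := by rw [hx, div_lt_one hξ]; linarith
  have hcos_le (ψ : ℝ) : x * cos (ψ / 2) ^ 2 ≤ x :=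
    mul_le_of_le_one_right hx0 (cos_sq_le_one _)
  set A : ℕ → ℝ := fun n => poch (1/2) n * poch (3/2) n / (n.factorial : ℝ)^2 * x ^ n
  have hA : HasSum (fun n => π * A n)
      (∫ ψ in (0:ℝ)..π, (1 - x * cos (ψ / 2) ^ 2) ^ (-(3/2) : ℝ)) := by
    convert hasSum_choose_mul_integral_pow (3/2) (f := fun ψ => x * cos (ψ / 2) ^ 2)
      (by fun_prop) hx0 hx1 (fun ψ _ => by rw [abs_of_nonneg (by positivity)]; exact hcos_le ψ)
      using 2 with n
    simp_rw [Ring.choose_add_sub_one_eq_poch_div_factorial, mul_pow, ← pow_mul,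
      integral_const_mul, integral_cos_half_pow_two_mul]
    ring
  have hA_nonneg (n : ℕ) : 0 ≤ A n := by
    have := poch_nonneg (a := 1 / 2) (by norm_num) n
    have := poch_nonneg (a := 3 / 2) (by norm_num) n
    positivity
  refine ⟨?_, ?_⟩
  · show Summable fun n => |A n|
    simp_rw [abs_of_nonneg (hA_nonneg _)]
    simpa [A, ← mul_assoc, pi_ne_zero] using hA.summable.mul_left π⁻¹
  · calc ∫ ψ in (0:ℝ)..π, (1 - ξ * cos ψ) ^ (-(3/2) : ℝ)
        = ∫ ψ in (0:ℝ)..π,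
            (1 + ξ) ^ (-(3/2) : ℝ) * (1 - x * cos (ψ / 2) ^ 2) ^ (-(3/2) : ℝ) :=
          integral_congr fun ψ _ => by
            rw [one_sub_mul_cos_eq_mul_one_sub_mul_cos_half_sq ξ ψ hξ.ne',
              mul_rpow hξ.le (by linarith [hcos_le ψ])]
      _ = (1 + ξ) ^ (-(3/2) : ℝ) * (π * ∑' n, A n) := by
          rw [integral_const_mul, ← hA.tsum_eq, tsum_mul_left]
      _ = _ := by rw [rpow_neg hξ.le]; ring
end
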